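/- arXiv:1504.03453 — 3 statements merged into one kernel-verified Lean document; each statement's English description precedes it below -/
import Mathlib

section
/- The power series Σ_{j≥0} a_j * (-1)^j / 2^(2j+1) * x^(2j+1), with a_j = (2j)!/(j!(j+1)!), converges for real x with |x| < 1 to x/(1 + sqrt(1 + x^2)), which equals (sqrt(1 + x^2) - 1)/x for x ≠ 0. -/
/-!
Substituting `t = x²` in the binomial series `√(1 + t) = ∑ₙ choose(1/2, n) tⁿ` (valid for
`|t| < 1`) and dividing `√(1 + x²) - 1` by `x` gives the series, because
`choose(1/2, j + 1) = (-1)ʲ a_j / 2^(2j+1)`: both sides equal `1/2` at `j = 0` and have the same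
ratio `-(2j + 1) / (2(j + 2))` between consecutive terms.
-/

noncomputable def a (j : ℕ) : ℝ :=
  (Nat.factorial (2 * j) : ℝ) / ((Nat.factorial j : ℝ) * (Nat.factorial (j + 1) : ℝ))

open Polynomial in
theorem Ring.choose_succ_mul {K : Type*} [Field K] [CharZero K] (r : K) (n : ℕ) :
    Ring.choose r (n + 1) * (n + 1) = Ring.choose r n * (r - n) := by
  rw [Ring.choose_eq_smul, Ring.choose_eq_smul, descPochhammer_succ_right, smeval_mul]
  simp only [smeval_sub, smeval_X, smeval_natCast, Nat.factorial_succ, nsmul_one, smul_eq_mul,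
    npow_one, npow_zero]
  push_cast
  field_simp

theorem Real.hasSum_choose_mul_pow {t : ℝ} (ht : |t| < 1) (r : ℝ) :
    HasSum (fun n => Ring.choose r n * t ^ n) ((1 + t) ^ r) := by
  have ht' : t ∈ Metric.eball (0 : ℝ) 1 := by
    rw [mem_eball_zero_iff, ← ofReal_norm, ENNReal.ofReal_lt_one]
    exact ht
  simpa [FormalMultilinearSeries.ofScalars_apply_eq, binomialSeries, mul_comm] using
    Real.one_add_rpow_hasFPowerSeriesOnBall_zero.hasSum ht'

theorem a_zero : a 0 = 1 := by simp [a]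

theorem a_succ_mul (j : ℕ) : a (j + 1) * (j + 2) = 2 * (2 * j + 1) * a j := by
  simp only [a, show 2 * (j + 1) = 2 * j + 1 + 1 by ring, Nat.factorial_succ]
  push_cast
  field_simp
  ring

theorem choose_half_succ_eq_a (j : ℕ) :
    Ring.choose (1 / 2 : ℝ) (j + 1) = a j * (-1) ^ j / 2 ^ (2 * j + 1) := by
  induction j with
  | zero => simp [a_zero]
  | succ j ih =>
    have hrec := Ring.choose_succ_mul (1 / 2 : ℝ) (j + 1)
    rw [ih] at hrec
    push_cast at hrec
    rw [← mul_left_inj' (show (j : ℝ) + 1 + 1 ≠ 0 by positivity), hrec,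
      show 2 * (j + 1) + 1 = (2 * j + 1) + 2 by ring]
    field_simp
    linear_combination ((-1) ^ j * 4 * 2 ^ (2 * j) : ℝ) * a_succ_mul j

theorem hasSum_sqrt_one_add_sub_one {t : ℝ} (ht : |t| < 1) :
    HasSum (fun j => a j * (-1) ^ j / 2 ^ (2 * j + 1) * t ^ (j + 1)) (√(1 + t) - 1) := by
  have h := (hasSum_nat_add_iff' 1).mpr (Real.hasSum_choose_mul_pow ht (1 / 2))
  simp only [choose_half_succ_eq_a, Finset.sum_range_one, Ring.choose_zero_right, pow_zero,
    mul_one] at h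
  rwa [Real.sqrt_eq_rpow]

theorem div_one_add_sqrt_one_add_sq {x : ℝ} (hx : x ≠ 0) :
    x / (1 + √(1 + x ^ 2)) = (√(1 + x ^ 2) - 1) / x := by
  have hsq : √(1 + x ^ 2) ^ 2 = 1 + x ^ 2 := Real.sq_sqrt (by positivity)
  have hpos : 0 < 1 + √(1 + x ^ 2) := by positivity
  rw [div_eq_div_iff hpos.ne' hx]
  linear_combination -hsq

theorem series_a (x : ℝ) (hx : |x| < 1) :
    HasSum (fun j : ℕ => a j * (-1) ^ j / 2 ^ (2 * j + 1) * x ^ (2 * j + 1))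
      (x / (1 + Real.sqrt (1 + x ^ 2))) ∧
    (x ≠ 0 → x / (1 + Real.sqrt (1 + x ^ 2)) = (Real.sqrt (1 + x ^ 2) - 1) / x) := by
  refine ⟨?_, fun hx0 => div_one_add_sqrt_one_add_sq hx0⟩
  rcases eq_or_ne x 0 with rfl | hx0
  · simp
  have hx2 : |x ^ 2| < 1 := by
    rw [abs_pow, sq_lt_one_iff₀ (abs_nonneg x)]
    exact hx
  rw [div_one_add_sqrt_one_add_sq hx0]
  have hterms : (fun j : ℕ => a j * (-1) ^ j / 2 ^ (2 * j + 1) * x ^ (2 * j + 1)) =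
      fun j => a j * (-1) ^ j / 2 ^ (2 * j + 1) * (x ^ 2) ^ (j + 1) / x := by
    funext j
    rw [← pow_mul, mul_add_one]
    field_simp
    ring
  rw [hterms]
  exact (hasSum_sqrt_one_add_sub_one hx2).div_const x
end

section
/- The power series Σ_{j≥1} b_j * (-1)^j / 2^(2j) * x^(2j-2), with b_j = (2j-1)!/(j!(j-1)!), converges for real x with 0 < |x| < 1 to (1/2) * (1/(1 + sqrt(1 + x^2)) - 1/sqrt(1 + x^2)). -/
/-!
Since `b (j + 1) = C(2j+2, j+1) / 2` and `C(-1/2, n) = (-1/4)^n C(2n, n)`, the `j`-th term is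
`C(-1/2, j+1) (x²)^j / 2`. The binomial series gives `Σ C(-1/2, n) y^n = 1/√(1+y)` for `|y| < 1`,
so the series is `(1/√(1+x²) - 1) / (2x²)`, which equals the stated value because
`x² = (s - 1)(s + 1)` for `s = √(1+x²)`.
-/

noncomputable def b (j : ℕ) : ℝ :=
  if j = 0 then 0
  else (Nat.factorial (2 * j - 1) : ℝ) / ((Nat.factorial j : ℝ) * (Nat.factorial (j - 1) : ℝ))

theorem Nat.centralBinom_succ_eq_two_mul_choose (n : ℕ) :
    (n + 1).centralBinom = 2 * (2 * n + 1).choose n := by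
  rw [centralBinom, show 2 * (n + 1) = 2 * n + 1 + 1 by ring, choose_succ_succ, choose_symm_half]
  ring

theorem Ring.choose_succ_eq_mul_div {K : Type*} [Field K] [CharZero K] (a : K) (n : ℕ) :
    Ring.choose a (n + 1) = Ring.choose a n * (a - n) / (n + 1) := by
  simp only [Ring.choose_eq_smul, ← Polynomial.aeval_eq_smeval, Polynomial.aeval_def,
    ← Polynomial.eval_map, descPochhammer_map, descPochhammer_succ_eval,
    Nat.factorial_succ, smul_eq_mul]
  push_cast
  field_simp

theorem Ring.choose_neg_half {K : Type*} [Field K] [CharZero K] (n : ℕ) :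
    Ring.choose (-1 / 2 : K) n = (-1 / 4) ^ n * n.centralBinom := by
  induction n with
  | zero => simp
  | succ n ih =>
    have h : ((n : K) + 1) * (n + 1).centralBinom = 2 * (2 * n + 1) * n.centralBinom := by
      exact_mod_cast n.succ_mul_centralBinom_succ
    rw [Ring.choose_succ_eq_mul_div, ih, pow_succ]
    field_simp
    linear_combination 2 * h

theorem Real.hasSum_choose_neg_half_mul_pow {y : ℝ} (hy : |y| < 1) :
    HasSum (fun n => Ring.choose (-1 / 2 : ℝ) n * y ^ n) (1 / √(1 + y)) := by
  have hbinom := (one_add_rpow_hasFPowerSeriesOnBall_zero (a := -1 / 2)).hasSum (y := y)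
    (by simpa [Metric.mem_eball, edist_dist] using hy)
  have hpow : (1 + y) ^ (-1 / 2 : ℝ) = 1 / √(1 + y) := by
    rw [neg_div, rpow_neg (by linarith [neg_abs_le y]), ← sqrt_eq_rpow, one_div]
  simpa [binomialSeries, FormalMultilinearSeries.ofScalars_apply_eq, mul_comm, hpow] using hbinom

theorem Real.hasSum_choose_neg_half_succ_mul_pow {y : ℝ} (hy0 : y ≠ 0) (hy : |y| < 1) :
    HasSum (fun n => Ring.choose (-1 / 2 : ℝ) (n + 1) * y ^ n) ((1 / √(1 + y) - 1) / y) := by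
  have htail : HasSum (fun n => Ring.choose (-1 / 2 : ℝ) (n + 1) * y ^ (n + 1)) (1 / √(1 + y) - 1) :=
    by simpa using (hasSum_nat_add_iff' 1).mpr (hasSum_choose_neg_half_mul_pow hy)
  exact (htail.div_const y).congr_fun fun n => by
    field_simp
    ring

theorem b_succ_eq_centralBinom (j : ℕ) : b (j + 1) = (j + 1).centralBinom / 2 := by
  rw [Nat.centralBinom_succ_eq_two_mul_choose, Nat.cast_mul,
    Nat.cast_choose ℝ (show j ≤ 2 * j + 1 by omega), b, if_neg j.succ_ne_zero,
    show 2 * (j + 1) - 1 = 2 * j + 1 by omega, show 2 * j + 1 - j = j + 1 by omega,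
    Nat.add_sub_cancel]
  push_cast
  ring

theorem b_succ_mul_div_eq_choose_neg_half (j : ℕ) :
    b (j + 1) * (-1) ^ (j + 1) / 2 ^ (2 * (j + 1)) = Ring.choose (-1 / 2 : ℝ) (j + 1) / 2 := by
  rw [Ring.choose_neg_half, b_succ_eq_centralBinom, pow_mul, div_pow]
  ring

theorem series_b (x : ℝ) (hx0 : 0 < |x|) (hx : |x| < 1) :
    HasSum (fun j : ℕ => b (j + 1) * (-1) ^ (j + 1) / 2 ^ (2 * (j + 1)) * x ^ (2 * j))
      ((1 / 2) * (1 / (1 + Real.sqrt (1 + x ^ 2)) - 1 / Real.sqrt (1 + x ^ 2))) := by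
  have hx2 : 0 < x ^ 2 := by simpa using pow_pos hx0 2
  have hseries := (Real.hasSum_choose_neg_half_succ_mul_pow hx2.ne'
    (by rwa [abs_of_pos hx2, sq_lt_one_iff_abs_lt_one])).mul_left (1 / 2)
  set s := Real.sqrt (1 + x ^ 2)
  have hvalue : 1 / 2 * (1 / (1 + s) - 1 / s) = 1 / 2 * ((1 / s - 1) / x ^ 2) := by
    have hs : s ^ 2 = 1 + x ^ 2 := Real.sq_sqrt (by positivity)
    have hs_gt_one : 1 < s := by nlinarith [Real.sqrt_nonneg (1 + x ^ 2)]
    have hs_sub_one : s - 1 ≠ 0 := (sub_pos.2 hs_gt_one).ne'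
    rw [show x ^ 2 = (s - 1) * (s + 1) by nlinarith]
    field_simp
    ring
  rw [hvalue]
  exact hseries.congr_fun fun j => by
    rw [b_succ_mul_div_eq_choose_neg_half, pow_mul]
    ring
end

section
/- The power series Σ_{j≥2} d_j * (-1)^j / 2^(2j-1) * x^(2j-4), with d_j = Σ_{j1+j2+j3=j-2} 2(j1+1) a_{j1} a_{j2} a_{j3}, converges for real x with |x| < 1 to (1/sqrt(1+x^2)) * (1/(1 + sqrt(1+x^2)))^2. -/
noncomputable def d (j : ℕ) : ℝ :=
  if j < 2 then 0
  else ∑ p ∈ Finset.HasAntidiagonal.antidiagonal (j - 2),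
        ∑ q ∈ Finset.HasAntidiagonal.antidiagonal p.2,
          2 * ((p.1 : ℝ) + 1) * a p.1 * a q.1 * a q.2

open Finset Nat

theorem sum_antidiagonal_mul_pow_mul_pow {R : Type*} [CommSemiring R] (u v : ℕ → R) (t : R)
    (n : ℕ) :
    ∑ p ∈ antidiagonal n, u p.1 * t ^ p.1 * (v p.2 * t ^ p.2)
      = (∑ p ∈ antidiagonal n, u p.1 * v p.2) * t ^ n := by
  rw [sum_mul]
  refine sum_congr rfl fun p hp ↦ ?_
  rw [← mem_antidiagonal.1 hp, pow_add]
  ring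

section CauchyProduct

variable {R : Type*} [NormedCommRing R] {u v : ℕ → R} {t : R}

theorem summable_norm_sum_antidiagonal_mul_pow (hu : Summable fun n ↦ ‖u n * t ^ n‖)
    (hv : Summable fun n ↦ ‖v n * t ^ n‖) :
    Summable fun n ↦ ‖(∑ p ∈ antidiagonal n, u p.1 * v p.2) * t ^ n‖ := by
  simpa only [sum_antidiagonal_mul_pow_mul_pow] using
    summable_norm_sum_mul_antidiagonal_of_summable_norm hu hv

theorem hasSum_sum_antidiagonal_mul_pow [CompleteSpace R] {U V : R}
    (hu : Summable fun n ↦ ‖u n * t ^ n‖) (hv : Summable fun n ↦ ‖v n * t ^ n‖)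
    (hU : HasSum (fun n ↦ u n * t ^ n) U) (hV : HasSum (fun n ↦ v n * t ^ n) V) :
    HasSum (fun n ↦ (∑ p ∈ antidiagonal n, u p.1 * v p.2) * t ^ n) (U * V) := by
  rw [← hU.tsum_eq, ← hV.tsum_eq, tsum_mul_tsum_eq_tsum_sum_antidiagonal_of_summable_norm hu hv]
  simpa only [sum_antidiagonal_mul_pow_mul_pow] using
    (summable_norm_sum_mul_antidiagonal_of_summable_norm hu hv).of_norm.hasSum

end CauchyProduct

theorem a_eq_catalan (j : ℕ) : a j = catalan j := by
  have hcat := congrArg (Nat.cast : ℕ → ℝ) (succ_mul_catalan_eq_centralBinom j)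
  rw [centralBinom_eq_two_mul_choose, Nat.cast_choose ℝ (by omega : j ≤ 2 * j),
    show 2 * j - j = j by omega] at hcat
  rw [a, factorial_succ]
  push_cast at hcat ⊢
  field_simp at hcat ⊢
  linear_combination -hcat

theorem d_add_two (n : ℕ) :
    d (n + 2) = 2 * ∑ p ∈ antidiagonal n,
      (centralBinom p.1 : ℝ) * ∑ q ∈ antidiagonal p.2, (catalan q.1 : ℝ) * catalan q.2 := by
  rw [d, if_neg (by omega), Nat.add_sub_cancel, mul_sum]
  refine sum_congr rfl fun p _ ↦ ?_
  rw [mul_sum, mul_sum]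
  refine sum_congr rfl fun q _ ↦ ?_
  rw [← succ_mul_catalan_eq_centralBinom, a_eq_catalan, a_eq_catalan, a_eq_catalan]
  push_cast
  ring

theorem d_add_two_mul_pow (x : ℝ) (n : ℕ) :
    d (n + 2) * (-1) ^ (n + 2) / 2 ^ (2 * (n + 2) - 1) * x ^ (2 * n)
      = (∑ p ∈ antidiagonal n, (centralBinom p.1 : ℝ) *
          ∑ q ∈ antidiagonal p.2, (catalan q.1 : ℝ) * catalan q.2) * (-x ^ 2 / 4) ^ n / 4 := by
  have hpow : (2 : ℝ) ^ (2 * (n + 2) - 1) = 8 * 4 ^ n := by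
    rw [show 2 * (n + 2) - 1 = 2 * n + 3 by omega, pow_add, pow_mul]
    norm_num [mul_comm]
  rw [d_add_two, hpow, div_pow, neg_pow (x ^ 2), ← pow_mul]
  field_simp
  ring

theorem centralBinom_eq_four_pow_mul_multichoose (n : ℕ) :
    (centralBinom n : ℝ) = 4 ^ n * Ring.multichoose (1 / 2 : ℝ) n := by
  have hpoch (m : ℕ) : (m ! : ℝ) * Ring.multichoose (1 / 2 : ℝ) m
      = (ascPochhammer ℝ m).eval (1 / 2) := by
    rw [← nsmul_eq_mul, Ring.factorial_nsmul_multichoose_eq_ascPochhammer,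
      Polynomial.ascPochhammer_smeval_eq_eval]
  induction n with
  | zero => simp
  | succ n ih =>
    have hc := congrArg (Nat.cast : ℕ → ℝ) (succ_mul_centralBinom_succ n)
    have h := hpoch (n + 1)
    rw [ascPochhammer_succ_eval, ← hpoch n, factorial_succ] at h
    push_cast at hc h
    have hn : (n : ℝ) + 1 ≠ 0 := by positivity
    have hf : (n ! : ℝ) ≠ 0 := by positivity
    apply mul_left_cancel₀ hn
    apply mul_left_cancel₀ hf
    linear_combination (n ! : ℝ) * hc + 2 * (2 * n + 1) * (n ! : ℝ) * ih - 4 ^ (n + 1) * h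

theorem hasSum_centralBinom_mul_pow {t : ℝ} (ht : |4 * t| < 1) :
    HasSum (fun n ↦ (centralBinom n : ℝ) * t ^ n) (1 / √(1 - 4 * t)) := by
  have hmem : 4 * t ∈ Metric.eball (0 : ℝ) 1 := by
    rw [Metric.mem_eball, edist_zero_right, enorm_eq_nnnorm, ← ENNReal.coe_one, ENNReal.coe_lt_coe,
      ← NNReal.coe_lt_coe, coe_nnnorm]
    exact ht
  have h := (Real.one_div_one_sub_rpow_hasFPowerSeriesOnBall_zero (1 / 2)).hasSum hmem
  rw [FormalMultilinearSeries.ofScalars_apply_eq', zero_add, ← Real.sqrt_eq_rpow] at h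
  refine h.congr_fun fun n ↦ ?_
  rw [smul_eq_mul, ← Ring.multichoose_eq, centralBinom_eq_four_pow_mul_multichoose, mul_pow]
  ring

theorem two_mul_catalan (n : ℕ) :
    2 * (catalan n : ℝ) = 4 * centralBinom n - centralBinom (n + 1) := by
  have hcat := congrArg (Nat.cast : ℕ → ℝ) (succ_mul_catalan_eq_centralBinom n)
  have hc := congrArg (Nat.cast : ℕ → ℝ) (succ_mul_centralBinom_succ n)
  push_cast at hcat hc
  apply mul_left_cancel₀ (show (n : ℝ) + 1 ≠ 0 by positivity)
  linear_combination 2 * hcat + hc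

theorem hasSum_catalan_mul_pow {t : ℝ} (ht : |4 * t| < 1) :
    HasSum (fun n ↦ (catalan n : ℝ) * t ^ n) (2 / (1 + √(1 - 4 * t))) := by
  rcases eq_or_ne t 0 with rfl | ht0
  · convert hasSum_single (f := fun n ↦ (catalan n : ℝ) * 0 ^ n) 0 fun n hn ↦ by simp [hn] using 1
    norm_num
  set s := √(1 - 4 * t)
  have hs : 0 < s := Real.sqrt_pos.2 (by linarith [le_abs_self (4 * t)])
  have hs2 : s ^ 2 = 1 - 4 * t := Real.sq_sqrt (by linarith [le_abs_self (4 * t)])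
  have hC : HasSum (fun n ↦ (centralBinom n : ℝ) * t ^ n) (1 / s) :=
    hasSum_centralBinom_mul_pow ht
  have hCshift : HasSum (fun n ↦ (centralBinom (n + 1) : ℝ) * t ^ (n + 1)) (1 / s - 1) := by
    simpa using (hasSum_nat_add_iff' 1).2 hC
  have hA := ((hC.mul_left 4).sub (hCshift.div_const t)).div_const 2
  rw [show (4 * (1 / s) - (1 / s - 1) / t) / 2 = 2 / (1 + s) by
    field_simp; linear_combination hs2] at hA
  refine hA.congr_fun fun n ↦ ?_
  rw [pow_succ, eq_div_iff two_ne_zero, mul_comm _ (2 : ℝ), ← mul_assoc, two_mul_catalan]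
  field_simp

theorem series_d (x : ℝ) (hx : |x| < 1) :
    HasSum (fun j : ℕ => d (j + 2) * (-1) ^ (j + 2) / 2 ^ (2 * (j + 2) - 1) * x ^ (2 * j))
      ((1 / Real.sqrt (1 + x ^ 2)) * (1 / (1 + Real.sqrt (1 + x ^ 2))) ^ 2) := by
  obtain ⟨t, htx⟩ : ∃ t : ℝ, t = -x ^ 2 / 4 := ⟨_, rfl⟩
  have ht : |4 * t| < 1 := by
    rw [htx, show 4 * (-x ^ 2 / 4) = -x ^ 2 by ring, abs_neg, abs_pow, sq_lt_one_iff_abs_lt_one]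
    simpa using hx
  have ht' : |4 * abs t| < 1 := by rwa [abs_mul, abs_abs, ← abs_mul]
  have hs : 1 + x ^ 2 = 1 - 4 * t := by rw [htx]; ring
  have hC := hasSum_centralBinom_mul_pow ht
  have hA := hasSum_catalan_mul_pow ht
  have hCn : Summable fun n ↦ ‖(centralBinom n : ℝ) * t ^ n‖ :=
    (hasSum_centralBinom_mul_pow ht').summable.congr fun n ↦ by simp
  have hAn : Summable fun n ↦ ‖(catalan n : ℝ) * t ^ n‖ :=
    (hasSum_catalan_mul_pow ht').summable.congr fun n ↦ by simp
  have hAA := hasSum_sum_antidiagonal_mul_pow hAn hAn hA hA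
  have hAAn := summable_norm_sum_antidiagonal_mul_pow hAn hAn
  have hCAA := hasSum_sum_antidiagonal_mul_pow hCn hAAn hC hAA
  have hsum : 1 / √(1 - 4 * t) * (2 / (1 + √(1 - 4 * t)) * (2 / (1 + √(1 - 4 * t)))) / 4
      = 1 / √(1 + x ^ 2) * (1 / (1 + √(1 + x ^ 2))) ^ 2 := by
    rw [hs]
    field_simp
    ring
  rw [← hsum]
  refine (hCAA.div_const 4).congr_fun fun n ↦ ?_
  rw [d_add_two_mul_pow, htx]
end
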